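/- arXiv:math/9908025 — 2 statements merged into one kernel-verified Lean document; each statement's English description precedes it below -/
import Mathlib

section
/- Suppose A is a closed densely defined operator on F whose domain and whose adjoint's domain both contain every reproducing kernel e_w, and suppose ⟨(e_u · e_v), A* e_w⟩ = ⟨A e_v, conj(e_u(w)) e_w⟩ for all u, v, w ∈ ℂ (i.e. A commutes with each multiplication operator M_{e_u} relative to K). Then, setting φ = A(e_0) = A(1), one has A e_v = φ · e_v for every v ∈ ℂ; in particular φ e_v ∈ F for all v, so φ ∈ Λ. -/
open MeasureTheory Complex Filter

/-- Gaussian measure dμ(z) = (r/π) e^{-r|z|²} dz on ℂ. -/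
noncomputable def gaussianM (r : ℝ) : Measure ℂ :=
  volume.withDensity fun z => ENNReal.ofReal ((r / Real.pi) * Real.exp (-r * ‖z‖ ^ 2))

/-- Reproducing kernel e_w(z) = exp(r z conj w). -/
noncomputable def ker (r : ℝ) (w : ℂ) : ℂ → ℂ := fun z => Complex.exp ((r : ℂ) * z * (starRingEnd ℂ) w)

/-- Membership in Bargmann-Segal space: entire and square-integrable against gaussianM r. -/
def InF (r : ℝ) (f : ℂ → ℂ) : Prop := Differentiable ℂ f ∧ MemLp f 2 (gaussianM r)

/-- Inner product of F, expressed as an integral. -/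
noncomputable def innerF (r : ℝ) (f g : ℂ → ℂ) : ℂ :=
  ∫ z, f z * (starRingEnd ℂ) (g z) ∂ gaussianM r

/-- The Newman-Shapiro class Λ. -/
def InLambda (r : ℝ) (φ : ℂ → ℂ) : Prop :=
  Differentiable ℂ φ ∧ ∀ N > (0:ℝ), ∃ C : ℝ, ∀ z : ℂ,
    ‖φ z‖ ≤ C * Real.exp (r * ‖z‖ ^ 2 / 2 - N * ‖z‖)

/-!
The reproducing property `⟨f, e_w⟩ = f w` on `F` is the mean value property of entire functions,
integrated against the radial Gaussian weight centred at `w`. With it, the adjoint relation turns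
the commutation hypothesis into `A e_{u+v} = e_u · A e_v` pointwise, so `A e_v = φ · e_v` with
`φ = A e_0`. Cauchy–Schwarz against the kernels gives `|g z| ≤ ‖g‖ e^{r|z|²/2}` for `g ∈ F`;
applied to `g = φ e_v` with `v ∈ {±s, ±is}`, `s = 2N/r`, chosen so that `2 Re(z v̄) ≥ s|z|`, this is
the growth bound defining `Λ`.
-/

open scoped Real InnerProductSpace ComplexConjugate

lemma integrableOn_polarCoord_target {E : Type*} [NormedAddCommGroup E] [NormedSpace ℝ E]
    {f : ℂ → E} (hf : Integrable f) (hc : Continuous f) :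
    IntegrableOn (fun p : ℝ × ℝ => p.1 • f (Complex.polarCoord.symm p)) polarCoord.target := by
  refine ⟨ContinuousOn.aestronglyMeasurable ?_ polarCoord.open_target.measurableSet, ?_⟩
  · exact continuous_fst.continuousOn.smul
      (hc.comp_continuousOn Complex.polarCoord.continuousOn_symm)
  · have hfin := hf.2
    rw [hasFiniteIntegral_def, ← Complex.lintegral_comp_polarCoord_symm] at hfin
    rw [hasFiniteIntegral_def]
    convert hfin using 1
    refine setLIntegral_congr_fun polarCoord.open_target.measurableSet fun p hp => ?_
    rw [enorm_smul, Real.enorm_of_nonneg hp.1.le, smul_eq_mul]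

section MeanValue

variable {E : Type*} [NormedAddCommGroup E] [NormedSpace ℂ E] [CompleteSpace E]

lemma integral_Ioo_comp_polarCoord_symm_eq_two_pi_smul {f : ℂ → E} (hf : Differentiable ℂ f)
    (ρ : ℝ) :
    ∫ θ in Set.Ioo (-π) π, f (Complex.polarCoord.symm (ρ, θ)) = (2 * π) • f 0 := by
  have hcircle : ∀ θ, Complex.polarCoord.symm (ρ, θ) = circleMap 0 ρ θ := by
    intro θ
    rw [Complex.polarCoord_symm_apply, circleMap, Complex.exp_mul_I]
    push_cast
    ring
  have hshift := ((periodic_circleMap 0 ρ).comp f).intervalIntegral_add_eq (-π) 0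
  rw [show -π + 2 * π = π by ring, zero_add] at hshift
  have hmean := hf.diffContOnCl.circleAverage (c := 0) (R := ρ)
  rw [Real.circleAverage_def] at hmean
  simp only [hcircle]
  rw [← integral_Ioc_eq_integral_Ioo, ← intervalIntegral.integral_of_le (by linarith [Real.pi_pos])]
  rw [← hmean, smul_inv_smul₀ (by positivity)]
  exact hshift

lemma integral_Ioi_mul_exp_neg_mul_sq {b : ℝ} (hb : 0 < b) :
    ∫ x in Set.Ioi (0 : ℝ), x * Real.exp (-b * x ^ 2) = (2 * b)⁻¹ := by
  apply Complex.ofReal_injective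
  rw [← integral_complex_ofReal]
  push_cast
  exact integral_mul_cexp_neg_mul_sq (by simpa using hb)

lemma integral_exp_neg_mul_sq_norm_smul {r : ℝ} (hr : 0 < r) {f : ℂ → E}
    (hf : Differentiable ℂ f) (hint : Integrable fun z => Real.exp (-r * ‖z‖ ^ 2) • f z) :
    ∫ z, Real.exp (-r * ‖z‖ ^ 2) • f z = (π / r) • f 0 := by
  have hpolar := integrableOn_polarCoord_target hint (by have := hf.continuous; fun_prop)
  have hcircle : ∀ ρ ∈ Set.Ioi (0 : ℝ),
      ∫ θ in Set.Ioo (-π) π, (ρ, θ).1 • Real.exp (-r * ‖Complex.polarCoord.symm (ρ, θ)‖ ^ 2) •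
        f (Complex.polarCoord.symm (ρ, θ)) = (ρ * Real.exp (-r * ρ ^ 2) * (2 * π)) • f 0 := by
    intro ρ hρ
    simp only [Complex.norm_polarCoord_symm, abs_of_pos (Set.mem_Ioi.mp hρ), smul_smul]
    rw [integral_smul, integral_Ioo_comp_polarCoord_symm_eq_two_pi_smul hf, smul_smul]
  have htarget : polarCoord.target = Set.Ioi (0 : ℝ) ×ˢ Set.Ioo (-π) π := rfl
  rw [htarget, Measure.volume_eq_prod] at hpolar
  rw [← Complex.integral_comp_polarCoord_symm, htarget, Measure.volume_eq_prod,
    setIntegral_prod _ hpolar, setIntegral_congr_fun measurableSet_Ioi hcircle,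
    integral_smul_const, integral_mul_const, integral_Ioi_mul_exp_neg_mul_sq hr]
  congr 1
  field_simp

lemma integral_exp_neg_mul_sq_norm_sub_smul {r : ℝ} (hr : 0 < r) {f : ℂ → E}
    (hf : Differentiable ℂ f) (c : ℂ)
    (hint : Integrable fun z => Real.exp (-r * ‖z - c‖ ^ 2) • f z) :
    ∫ z, Real.exp (-r * ‖z - c‖ ^ 2) • f z = (π / r) • f c := by
  have hshift : Integrable fun z => Real.exp (-r * ‖z‖ ^ 2) • f (z + c) := by
    simpa using hint.comp_add_right c
  rw [← integral_add_right_eq_self _ c]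
  simpa using integral_exp_neg_mul_sq_norm_smul hr (hf.comp (differentiable_id.add_const c)) hshift

end MeanValue

section GaussianMeasure

variable {r : ℝ} {E : Type*} [NormedAddCommGroup E] [NormedSpace ℝ E]

lemma measurable_gaussianDensity :
    Measurable fun z : ℂ => ENNReal.ofReal (r / π * Real.exp (-r * ‖z‖ ^ 2)) := by
  fun_prop

lemma toReal_gaussianDensity (hr : 0 ≤ r) (z : ℂ) :
    (ENNReal.ofReal (r / π * Real.exp (-r * ‖z‖ ^ 2))).toReal = r / π * Real.exp (-r * ‖z‖ ^ 2) :=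
  ENNReal.toReal_ofReal (by positivity)

lemma integral_gaussianM (hr : 0 ≤ r) (g : ℂ → E) :
    ∫ z, g z ∂gaussianM r = (r / π) • ∫ z, Real.exp (-r * ‖z‖ ^ 2) • g z := by
  rw [gaussianM, integral_withDensity_eq_integral_toReal_smul measurable_gaussianDensity
    (ae_of_all _ fun _ => ENNReal.ofReal_lt_top), ← integral_smul]
  simp_rw [toReal_gaussianDensity hr, smul_smul]

lemma integrable_gaussianM_iff (hr : 0 < r) {g : ℂ → E} :
    Integrable g (gaussianM r) ↔ Integrable fun z => Real.exp (-r * ‖z‖ ^ 2) • g z := by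
  rw [gaussianM, integrable_withDensity_iff_integrable_smul' measurable_gaussianDensity
    (ae_of_all _ fun _ => ENNReal.ofReal_lt_top)]
  simp_rw [toReal_gaussianDensity hr.le, mul_smul]
  exact integrable_smul_iff (by positivity) _

end GaussianMeasure

section Kernel

variable {r : ℝ}

lemma ker_mul_ker (u v z : ℂ) : ker r u z * ker r v z = ker r (u + v) z := by
  simp only [_root_.ker, ← Complex.exp_add, map_add]
  ring_nf

lemma differentiable_ker (w : ℂ) : Differentiable ℂ (ker r w) := by
  unfold _root_.ker
  fun_prop

lemma norm_ker (w z : ℂ) : ‖ker r w z‖ = Real.exp (r * (z * conj w).re) := by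
  simp [_root_.ker, Complex.norm_exp, mul_assoc, Complex.mul_re]

lemma memLp_ker (hr : 0 < r) (w : ℂ) : MemLp (ker r w) 2 (gaussianM r) := by
  rw [memLp_two_iff_integrable_sq_norm (differentiable_ker w).continuous.aestronglyMeasurable,
    integrable_gaussianM_iff hr]
  refine (GaussianFourier.integrable_cexp_neg_mul_sq_norm_add (V := ℂ) (b := r)
    (by simpa using hr) (2 * r) w).norm.congr (ae_of_all _ fun z => ?_)
  simp only [Complex.norm_exp, smul_eq_mul, norm_ker, ← Real.exp_nat_mul, ← Real.exp_add,
    Complex.inner]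
  congr 1
  norm_cast
  ring

end Kernel

section InnerF

variable {r : ℝ} {f g : ℂ → ℂ}

lemma innerF_const_mul_right (c : ℂ) (f g : ℂ → ℂ) :
    innerF r f (fun z => c * g z) = conj c * innerF r f g := by
  rw [innerF, innerF, ← integral_const_mul]
  congr 1 with z
  rw [map_mul]
  ring

lemma integrable_mul_conj (hf : MemLp f 2 (gaussianM r)) (hg : MemLp g 2 (gaussianM r)) :
    Integrable (fun z => f z * conj (g z)) (gaussianM r) :=
  hf.integrable_mul hg.star

lemma innerF_eq_conj_inner (hf : MemLp f 2 (gaussianM r)) (hg : MemLp g 2 (gaussianM r)) :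
    innerF r f g = conj ⟪hf.toLp f, hg.toLp g⟫_ℂ := by
  rw [L2.inner_def, ← integral_conj]
  refine integral_congr_ae ?_
  filter_upwards [hf.coeFn_toLp, hg.coeFn_toLp] with z hfz hgz
  rw [hfz, hgz, RCLike.inner_apply, map_mul, RCLike.conj_conj, mul_comm]

theorem innerF_ker (hr : 0 < r) (hf : InF r f) (w : ℂ) : innerF r f (ker r w) = f w := by
  -- completing the square: `-r|z|² + r z̄ w = -r|z - w|² + r (w - z) w̄`
  set H : ℂ → ℂ := fun z => f z * cexp (r * (w - z) * conj w) with hH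
  have hweight : ∀ z, Real.exp (-r * ‖z‖ ^ 2) • (f z * conj (ker r w z))
      = Real.exp (-r * ‖z - w‖ ^ 2) • H z := by
    intro z
    simp only [hH, Complex.real_smul, Complex.ofReal_exp, _root_.ker, ← Complex.exp_conj, map_mul,
      Complex.conj_ofReal, Complex.conj_conj]
    rw [mul_left_comm, ← Complex.exp_add, mul_left_comm _ (f z), ← Complex.exp_add]
    congr 2
    push_cast
    rw [← Complex.mul_conj', ← Complex.mul_conj', map_sub]
    ring
  have hint : Integrable fun z => Real.exp (-r * ‖z - w‖ ^ 2) • H z := by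
    simp_rw [← hweight]
    exact (integrable_gaussianM_iff hr).1 (integrable_mul_conj hf.2 (memLp_ker hr w))
  have hHdiff : Differentiable ℂ H := hf.1.mul (by fun_prop)
  rw [innerF, integral_gaussianM hr.le]
  simp_rw [hweight]
  rw [integral_exp_neg_mul_sq_norm_sub_smul hr hHdiff w hint, smul_smul,
    div_mul_div_cancel₀ Real.pi_ne_zero, div_self hr.ne', one_smul]
  simp [hH]

end InnerF

section Lambda

variable {r : ℝ} {f : ℂ → ℂ}

lemma norm_toLp_ker (hr : 0 < r) (w : ℂ) :
    ‖(memLp_ker hr w).toLp (ker r w)‖ = Real.exp (r * ‖w‖ ^ 2 / 2) := by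
  have hsq : ‖(memLp_ker hr w).toLp (ker r w)‖ ^ 2 = Real.exp (r * ‖w‖ ^ 2) := by
    rw [← inner_self_eq_norm_sq (𝕜 := ℂ), ← RCLike.conj_re, ← innerF_eq_conj_inner,
      innerF_ker hr ⟨differentiable_ker w, memLp_ker hr w⟩, _root_.ker, mul_assoc,
      Complex.mul_conj', ← Complex.ofReal_pow, ← Complex.ofReal_mul, ← Complex.ofReal_exp]
    exact Complex.ofReal_re _
  rw [Real.exp_half, ← hsq, Real.sqrt_sq (norm_nonneg _)]

lemma norm_le_norm_toLp_mul_exp (hr : 0 < r) (hf : InF r f) (w : ℂ) :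
    ‖f w‖ ≤ ‖hf.2.toLp f‖ * Real.exp (r * ‖w‖ ^ 2 / 2) := by
  rw [← innerF_ker hr hf w, innerF_eq_conj_inner hf.2 (memLp_ker hr w), RCLike.norm_conj,
    ← norm_toLp_ker hr w]
  exact norm_inner_le_norm _ _

lemma exists_mem_units_norm_le_two_mul_re (z : ℂ) :
    ∃ v ∈ ({1, -1, I, -I} : Finset ℂ), ‖z‖ ≤ 2 * (z * conj v).re := by
  have hnorm := Complex.norm_le_abs_re_add_abs_im z
  by_contra! h
  simp only [Finset.mem_insert, Finset.mem_singleton, forall_eq_or_imp, forall_eq, mul_re,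
    conj_re, conj_im, one_re, one_im, neg_re, neg_im, I_re, I_im] at h
  cases abs_cases z.re <;> cases abs_cases z.im <;> linarith

theorem inLambda_of_forall_inF_mul_ker (hr : 0 < r) {φ : ℂ → ℂ}
    (hφ : ∀ v, InF r fun z => φ z * ker r v z) : InLambda r φ := by
  refine ⟨by simpa [_root_.ker] using (hφ 0).1, fun N hN => ?_⟩
  set s : ℝ := 2 * N / r
  set S : Finset ℂ := {1, -1, I, -I}
  refine ⟨∑ v ∈ S, ‖(hφ (s * v)).2.toLp _‖, fun z => ?_⟩
  obtain ⟨v, hvS, hv⟩ := exists_mem_units_norm_le_two_mul_re z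
  have hbound := norm_le_norm_toLp_mul_exp hr (hφ (s * v)) z
  rw [norm_mul, norm_ker] at hbound
  have hre : N * ‖z‖ ≤ r * (z * conj (s * v)).re := by
    have hscale : (z * conj (s * v)).re = s * (z * conj v).re := by
      rw [map_mul, Complex.conj_ofReal, mul_left_comm, Complex.re_ofReal_mul]
    rw [hscale, ← mul_assoc, mul_div_cancel₀ _ hr.ne']
    nlinarith
  have hC : ‖(hφ (s * v)).2.toLp _‖ ≤ ∑ v ∈ S, ‖(hφ (s * v)).2.toLp _‖ :=
    Finset.single_le_sum (f := fun v => ‖(hφ (s * v)).2.toLp _‖) (fun _ _ => norm_nonneg _) hvS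
  calc ‖φ z‖
      ≤ ‖(hφ (s * v)).2.toLp _‖ * Real.exp (r * ‖z‖ ^ 2 / 2 - r * (z * conj (s * v)).re) := by
        rw [Real.exp_sub, mul_div_assoc', le_div_iff₀ (Real.exp_pos _)]
        exact hbound
    _ ≤ _ := by gcongr

end Lambda

theorem stmt11_general (r : ℝ) (hr : 0 < r) (Ae AstarE : ℂ → ℂ → ℂ)
    (hAe : ∀ v : ℂ, InF r (Ae v))
    (hadj : ∀ v w : ℂ, innerF r (Ae v) (ker r w) = innerF r (ker r v) (AstarE w))
    (hcomm : ∀ u v w : ℂ,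
      innerF r (fun z => ker r u z * ker r v z) (AstarE w)
        = innerF r (Ae v) (fun z => (starRingEnd ℂ) (ker r u w) * ker r w z)) :
    (∀ v z : ℂ, Ae v z = Ae 0 z * ker r v z) ∧ InLambda r (Ae 0) := by
  have hshift : ∀ u v w, Ae (u + v) w = ker r u w * Ae v w := fun u v w =>
    calc Ae (u + v) w = innerF r (ker r (u + v)) (AstarE w) := by
          rw [← hadj, innerF_ker hr (hAe _)]
      _ = innerF r (fun z => ker r u z * ker r v z) (AstarE w) := by simp_rw [ker_mul_ker]
      _ = innerF r (Ae v) (fun z => conj (ker r u w) * ker r w z) := hcomm u v w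
      _ = ker r u w * Ae v w := by
          rw [innerF_const_mul_right, innerF_ker hr (hAe v), Complex.conj_conj]
  have hmul : ∀ v z, Ae v z = Ae 0 z * ker r v z := fun v z => by
    simpa [mul_comm] using hshift v 0 z
  refine ⟨hmul, inLambda_of_forall_inF_mul_ker hr fun v => ?_⟩
  simpa only [← hmul] using hAe v

theorem stmt11 (r : ℝ) (hr : 0 < r) (Ae AstarE : ℂ → ℂ → ℂ)
    (hAe : ∀ v : ℂ, InF r (Ae v)) (hAst : ∀ w : ℂ, InF r (AstarE w))
    (hadj : ∀ v w : ℂ, innerF r (Ae v) (ker r w) = innerF r (ker r v) (AstarE w))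
    (hcomm : ∀ u v w : ℂ,
      innerF r (fun z => ker r u z * ker r v z) (AstarE w)
        = innerF r (Ae v) (fun z => (starRingEnd ℂ) (ker r u w) * ker r w z)) :
    (∀ v z : ℂ, Ae v z = Ae 0 z * ker r v z) ∧ InLambda r (Ae 0) :=
  stmt11_general r hr Ae AstarE hAe hadj hcomm
end

section
/- If φ is entire and the domain D(M_φ) = {g ∈ F : φg ∈ F} contains some polynomial p of degree k, then D(M_φ) contains every polynomial of degree ≤ k. -/
open MeasureTheory Complex Filter

/-!
Since `deg q ≤ deg p`, `q = O(p)` at infinity, so `φ q = O(φ p)` outside some compact set `K`;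
on `K` the continuous function `φ q` is bounded, and `K` has finite Gaussian measure. Hence
`|φ q| ≤ C |φ p| + M 𝟙_K`, which is square-integrable.
-/

open Asymptotics

theorem MeasureTheory.MemLp.of_isBigO_cocompact {α E F : Type*} [TopologicalSpace α] [T2Space α]
    [MeasurableSpace α] [OpensMeasurableSpace α] [NormedAddCommGroup E] [NormedAddCommGroup F]
    [SecondCountableTopologyEither α E] {μ : Measure α} [IsFiniteMeasureOnCompacts μ]
    {p : ENNReal} {f : α → E} {g : α → F}
    (hg : MemLp g p μ) (hf : Continuous f) (hfg : f =O[cocompact α] g) : MemLp f p μ := by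
  obtain ⟨C, hC0, hC⟩ := hfg.exists_nonneg
  obtain ⟨K, hK, hKc⟩ := mem_cocompact.1 hC.bound
  obtain ⟨M, hM⟩ := hK.exists_bound_of_continuousOn hf.continuousOn
  have hdom : MemLp (fun x => C * ‖g x‖ + K.indicator (fun _ => M) x) p μ :=
    (hg.norm.const_mul C).add
      (memLp_indicator_const p hK.measurableSet M (Or.inr hK.measure_lt_top.ne))
  refine hdom.of_le hf.aestronglyMeasurable <|
    ae_of_all _ fun x => le_trans ?_ (Real.le_norm_self _)
  have hCg : 0 ≤ C * ‖g x‖ := by positivity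
  by_cases hx : x ∈ K
  · rw [Set.indicator_of_mem hx]
    exact (hM x hx).trans (le_add_of_nonneg_left hCg)
  · rw [Set.indicator_of_notMem hx, add_zero]
    exact hKc hx

instance gaussianM.isLocallyFiniteMeasure (r : ℝ) : IsLocallyFiniteMeasure (gaussianM r) :=
  IsLocallyFiniteMeasure.withDensity_ofReal (by fun_prop)

theorem stmt18_general (r : ℝ) (φ : ℂ → ℂ) (hφ : Differentiable ℂ φ)
    (k : ℕ) (p : Polynomial ℂ) (hp : p.degree = (k : ℕ))
    (hmem : MemLp (fun z : ℂ => φ z * p.eval z) 2 (gaussianM r)) :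
    ∀ q : Polynomial ℂ, q.degree ≤ (k : ℕ) →
      MemLp (fun z : ℂ => φ z * q.eval z) 2 (gaussianM r) := by
  intro q hq
  have hqp : (fun z => q.eval z) =O[cocompact ℂ] fun z => p.eval z := by
    rw [← Metric.cobounded_eq_cocompact]
    exact Polynomial.isBigO_cobounded_of_degree_le (hq.trans hp.ge)
  exact hmem.of_isBigO_cocompact (hφ.continuous.mul q.continuous) ((isBigO_refl φ _).mul hqp)

theorem stmt18 (r : ℝ) (hr : 0 < r) (φ : ℂ → ℂ) (hφ : Differentiable ℂ φ)
    (k : ℕ) (p : Polynomial ℂ) (hp : p.degree = (k : ℕ))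
    (hmem : MemLp (fun z : ℂ => φ z * p.eval z) 2 (gaussianM r)) :
    ∀ q : Polynomial ℂ, q.degree ≤ (k : ℕ) →
      MemLp (fun z : ℂ => φ z * q.eval z) 2 (gaussianM r) :=
  stmt18_general r φ hφ k p hp hmem
end
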